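/- arXiv:2007.01808 — 5 statements merged into one kernel-verified Lean document; each statement's English description precedes it below -/
import Mathlib

section
/- For every k > 1, the number 2·p_{k−1} occurs as a difference between consecutive positive integers coprime to p_k#; that is, 2·p_{k−1} ∈ D(k). -/
/-!
Let `q = p_{k-1}` and `r = p_k`, and choose `x` by the Chinese remainder theorem so that the
centre `c = x + q` is divisible by every prime below `q`, `c - 1` by `q` and `c + 1` by `r`.
Every `c ± d` with `2 ≤ d < q` then shares the smallest prime factor of `d`, and `c` itself is
even, so the `2q - 1` integers strictly between `x = c - q` and `x + 2q = c + q` are not coprime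
to `p_k#`. The endpoints `c ± q` are: they are `±q` modulo each prime below `q`, `1` modulo `q`,
and `-1 ± q ≢ 0` modulo `r`, as `q + 1 < r`.
-/

namespace PrimorialDifferences

open Nat

/-- The k-th primorial: product of the first k primes (p_1 = 2 is `Nat.nth Nat.Prime 0`). -/
noncomputable def primorial (k : ℕ) : ℕ := ∏ i ∈ Finset.range k, Nat.nth Nat.Prime i

/-- `memD k m` : `m` is a difference between consecutive positive integers coprime to `primorial k`. -/
def memD (k m : ℕ) : Prop :=
  ∃ x : ℕ, 0 < x ∧ Nat.gcd x (primorial k) = 1 ∧ Nat.gcd (x + m) (primorial k) = 1 ∧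
    ∀ j : ℕ, 0 < j → j < m → 1 < Nat.gcd (x + j) (primorial k)

lemma nth_prime_lt_nth_prime_iff {i j : ℕ} : nth Nat.Prime i < nth Nat.Prime j ↔ i < j :=
  nth_lt_nth infinite_setOfPred_prime

lemma nth_prime_le_nth_prime_iff {i j : ℕ} : nth Nat.Prime i ≤ nth Nat.Prime j ↔ i ≤ j :=
  nth_le_nth infinite_setOfPred_prime

lemma two_lt_nth_prime {n : ℕ} (hn : 0 < n) : 2 < nth Nat.Prime n :=
  nth_prime_zero_eq_two ▸ nth_prime_lt_nth_prime_iff.2 hn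

lemma nth_prime_add_one_lt {n : ℕ} (hn : 0 < n) :
    nth Nat.Prime n + 1 < nth Nat.Prime (n + 1) := by
  have hlt := nth_prime_lt_nth_prime_iff.2 (lt_add_one n)
  have h2 := two_lt_nth_prime hn
  rcases (prime_nth_prime n).eq_two_or_odd' with hq | hq
  · omega
  rcases (prime_nth_prime (n + 1)).eq_two_or_odd' with hr | hr
  · omega
  by_contra! hle
  rw [show nth Nat.Prime (n + 1) = nth Nat.Prime n + 1 by omega, Nat.odd_add_one] at hr
  exact hr hq

lemma prime_lt_nth_prime_add_one_iff {p k : ℕ} (hp : p.Prime) :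
    p < nth Nat.Prime (k + 1) ↔ p ≤ nth Nat.Prime k := by
  rw [← nth_count hp, nth_prime_lt_nth_prime_iff, nth_prime_le_nth_prime_iff, Nat.lt_succ_iff]

lemma prime_lt_nth_prime_add_two {p n : ℕ} (hp : p.Prime) (h : p < nth Nat.Prime (n + 2)) :
    p < nth Nat.Prime n ∨ p = nth Nat.Prime n ∨ p = nth Nat.Prime (n + 1) := by
  rw [prime_lt_nth_prime_add_one_iff hp, le_iff_lt_or_eq, prime_lt_nth_prime_add_one_iff hp,
    le_iff_lt_or_eq] at h
  tauto

lemma primorial_pos (k : ℕ) : 0 < primorial k :=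
  Finset.prod_pos fun i _ => (prime_nth_prime i).pos

lemma prime_dvd_primorial_iff {p k : ℕ} (hp : p.Prime) :
    p ∣ primorial k ↔ p < nth Nat.Prime k := by
  constructor
  · intro h
    obtain ⟨i, hi, hpi⟩ := (Prime.dvd_finsetProd_iff hp.prime _).1 h
    rw [(prime_dvd_prime_iff_eq hp (prime_nth_prime i)).1 hpi]
    exact nth_prime_lt_nth_prime_iff.2 (Finset.mem_range.1 hi)
  · intro h
    rw [← nth_count hp] at h ⊢
    exact Finset.dvd_prod_of_mem _ (Finset.mem_range.2 (nth_prime_lt_nth_prime_iff.1 h))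

lemma coprime_primorial_iff {a k : ℕ} :
    Coprime a (primorial k) ↔ ∀ p, p.Prime → p < nth Nat.Prime k → ¬p ∣ a := by
  constructor
  · intro h p hp hpk hpa
    exact hp.one_lt.ne' (eq_one_of_dvd_coprimes h hpa ((prime_dvd_primorial_iff hp).2 hpk))
  · exact fun h => coprime_of_dvd fun p hp hpa hpP =>
      h p hp ((prime_dvd_primorial_iff hp).1 hpP) hpa

lemma one_lt_gcd_primorial_iff {a k : ℕ} :
    1 < Nat.gcd a (primorial k) ↔ ∃ p, p.Prime ∧ p < nth Nat.Prime k ∧ p ∣ a := by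
  have hpos : 0 < Nat.gcd a (primorial k) := gcd_pos_of_pos_right _ (primorial_pos k)
  rw [show 1 < Nat.gcd a (primorial k) ↔ ¬Coprime a (primorial k) by unfold Coprime; omega,
    coprime_primorial_iff]
  push Not
  rfl

lemma coprime_nth_prime_primorial {m n : ℕ} (h : n ≤ m) :
    Coprime (nth Nat.Prime m) (primorial n) :=
  coprime_primorial_iff.2 fun p hp hpn hpm => by
    rw [(prime_dvd_prime_iff_eq hp (prime_nth_prime m)).1 hpm] at hpn
    exact hpn.not_ge (nth_prime_le_nth_prime_iff.2 h)

lemma exists_modEq_three {a b c : ℕ} (hab : Coprime a b) (hac : Coprime a c) (hbc : Coprime b c)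
    (u v w : ℕ) : ∃ y, y ≡ u [MOD a] ∧ y ≡ v [MOD b] ∧ y ≡ w [MOD c] := by
  obtain ⟨z, hzb, hzc⟩ := chineseRemainder hbc v w
  obtain ⟨y, hya, hyz⟩ := chineseRemainder (hab.mul_right hac) u z
  exact ⟨y, hya, (hyz.of_mul_right c).trans hzb, (hyz.of_mul_left b).trans hzc⟩

-- `(a - 1) * u` is a natural-number representative of `-u` modulo `a`.
lemma dvd_add_of_modEq_pred_mul {a y u : ℕ} (ha : 0 < a) (h : y ≡ (a - 1) * u [MOD a]) :
    a ∣ y + u := by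
  rw [← modEq_zero_iff_dvd]
  calc y + u ≡ (a - 1) * u + u [MOD a] := h.add_right u
    _ = a * u := by rw [← Nat.succ_mul, Nat.succ_eq_add_one, Nat.sub_add_cancel ha]
    _ ≡ 0 [MOD a] := modEq_zero_iff_dvd.2 (dvd_mul_right a u)

lemma exists_pos_dvd_add_three {a b c : ℕ} (ha : 0 < a) (hb : 0 < b) (hc : 0 < c)
    (hab : Coprime a b) (hac : Coprime a c) (hbc : Coprime b c) (u v w : ℕ) :
    ∃ x, 0 < x ∧ a ∣ x + u ∧ b ∣ x + v ∧ c ∣ x + w := by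
  obtain ⟨y, hya, hyb, hyc⟩ :=
    exists_modEq_three hab hac hbc ((a - 1) * u) ((b - 1) * v) ((c - 1) * w)
  refine ⟨y + a * b * c, by positivity, ?_, ?_, ?_⟩ <;> rw [add_right_comm]
  · exact dvd_add (dvd_add_of_modEq_pred_mul ha hya) ⟨b * c, by ring⟩
  · exact dvd_add (dvd_add_of_modEq_pred_mul hb hyb) ⟨a * c, by ring⟩
  · exact dvd_add (dvd_add_of_modEq_pred_mul hc hyc) ⟨a * b, by ring⟩

section Gap

variable {n x : ℕ}

lemma coprime_primorial_gap_start (hn : 0 < n) (hP : primorial n ∣ x + nth Nat.Prime n)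
    (hq : nth Nat.Prime n ∣ x + (nth Nat.Prime n - 1))
    (hr : nth Nat.Prime (n + 1) ∣ x + (nth Nat.Prime n + 1)) :
    Coprime x (primorial (n + 2)) := by
  set q := nth Nat.Prime n
  have h2q := two_lt_nth_prime hn
  have hqr := nth_prime_add_one_lt hn
  refine coprime_primorial_iff.2 fun p hp hpB hpx => ?_
  rcases prime_lt_nth_prime_add_two hp hpB with hpq | rfl | rfl
  · have hpq' := (Nat.dvd_add_right hpx).1 (((prime_dvd_primorial_iff hp).2 hpq).trans hP)
    exact hpq.ne ((prime_dvd_prime_iff_eq hp (prime_nth_prime n)).1 hpq')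
  · have := Nat.le_of_dvd (by omega) ((Nat.dvd_add_right hpx).1 hq)
    omega
  · have := Nat.le_of_dvd (by omega) ((Nat.dvd_add_right hpx).1 hr)
    omega

lemma coprime_primorial_gap_end (hn : 0 < n) (hP : primorial n ∣ x + nth Nat.Prime n)
    (hq : nth Nat.Prime n ∣ x + (nth Nat.Prime n - 1))
    (hr : nth Nat.Prime (n + 1) ∣ x + (nth Nat.Prime n + 1)) :
    Coprime (x + 2 * nth Nat.Prime n) (primorial (n + 2)) := by
  set q := nth Nat.Prime n
  have h2q := two_lt_nth_prime hn
  have hqr := nth_prime_add_one_lt hn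
  refine coprime_primorial_iff.2 fun p hp hpB hpx => ?_
  rcases prime_lt_nth_prime_add_two hp hpB with hpq | rfl | rfl
  · rw [show x + 2 * q = x + q + q by ring] at hpx
    have hpq' := (Nat.dvd_add_right (((prime_dvd_primorial_iff hp).2 hpq).trans hP)).1 hpx
    exact hpq.ne ((prime_dvd_prime_iff_eq hp (prime_nth_prime n)).1 hpq')
  · rw [show x + 2 * q = x + (q - 1) + (q + 1) by omega] at hpx
    have := (Nat.dvd_add_right (dvd_refl q)).1 ((Nat.dvd_add_right hq).1 hpx)
    exact (prime_nth_prime n).one_lt.ne' (Nat.dvd_one.1 this)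
  · rw [show x + 2 * q = x + (q + 1) + (q - 1) by omega] at hpx
    have := Nat.le_of_dvd (by omega) ((Nat.dvd_add_right hr).1 hpx)
    omega

lemma exists_prime_dvd_gap_interior (hn : 0 < n) (hP : primorial n ∣ x + nth Nat.Prime n)
    (hq : nth Nat.Prime n ∣ x + (nth Nat.Prime n - 1))
    (hr : nth Nat.Prime (n + 1) ∣ x + (nth Nat.Prime n + 1))
    {j : ℕ} (hj₀ : 0 < j) (hj : j < 2 * nth Nat.Prime n) :
    ∃ p, p.Prime ∧ p < nth Nat.Prime (n + 2) ∧ p ∣ x + j := by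
  set q := nth Nat.Prime n
  set r := nth Nat.Prime (n + 1)
  have h2q := two_lt_nth_prime hn
  have hqr := nth_prime_add_one_lt hn
  have hrB : r < nth Nat.Prime (n + 2) := nth_prime_lt_nth_prime_iff.2 (lt_add_one _)
  have hcentre : ∀ p, p.Prime → p < q → p ∣ x + q :=
    fun p hp hpq => ((prime_dvd_primorial_iff hp).2 hpq).trans hP
  have hnear : ∀ d, 2 ≤ d → d < q →
      ∃ p, p.Prime ∧ p < nth Nat.Prime (n + 2) ∧ p ∣ d ∧ p ∣ x + q := by
    intro d hd hdq
    have hp := minFac_prime (show d ≠ 1 by omega)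
    have hpq : d.minFac < q := (minFac_le (by omega)).trans_lt hdq
    exact ⟨d.minFac, hp, by omega, minFac_dvd d, hcentre _ hp hpq⟩
  obtain h | h | rfl | rfl | h : j + 1 < q ∨ j + 1 = q ∨ j = q ∨ j = q + 1 ∨ q + 1 < j := by
    omega
  · obtain ⟨p, hp, hpB, hpd, hpc⟩ := hnear (q - j) (by omega) (by omega)
    rw [show x + q = x + j + (q - j) by omega] at hpc
    exact ⟨p, hp, hpB, (Nat.dvd_add_left hpd).1 hpc⟩
  · exact ⟨q, prime_nth_prime n, by omega, by rwa [show j = q - 1 by omega]⟩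
  · exact ⟨2, prime_two, by omega, hcentre 2 prime_two h2q⟩
  · exact ⟨r, prime_nth_prime (n + 1), hrB, hr⟩
  · obtain ⟨p, hp, hpB, hpd, hpc⟩ := hnear (j - q) (by omega) (by omega)
    rw [show x + j = x + q + (j - q) by omega]
    exact ⟨p, hp, hpB, dvd_add hpc hpd⟩

lemma memD_of_dvd (hn : 0 < n) (hx : 0 < x) (hP : primorial n ∣ x + nth Nat.Prime n)
    (hq : nth Nat.Prime n ∣ x + (nth Nat.Prime n - 1))
    (hr : nth Nat.Prime (n + 1) ∣ x + (nth Nat.Prime n + 1)) :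
    memD (n + 2) (2 * nth Nat.Prime n) :=
  ⟨x, hx, coprime_primorial_gap_start hn hP hq hr, coprime_primorial_gap_end hn hP hq hr,
    fun _ hj₀ hj =>
      one_lt_gcd_primorial_iff.2 (exists_prime_dvd_gap_interior hn hP hq hr hj₀ hj)⟩

end Gap

lemma memD_two : memD 2 (2 * nth Nat.Prime 0) := by
  have h6 : primorial 2 = 6 := by
    simp [primorial, Finset.prod_range_succ, nth_prime_zero_eq_two, nth_prime_one_eq_three]
  unfold memD
  rw [h6, nth_prime_zero_eq_two]
  refine ⟨1, one_pos, by decide, by decide, fun j hj₀ hj => ?_⟩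
  interval_cases j <;> decide

theorem two_mul_prime_mem_D (k : ℕ) (hk : 1 < k) :
    memD k (2 * Nat.nth Nat.Prime (k - 2)) := by
  obtain ⟨n, rfl⟩ : ∃ n, k = n + 2 := ⟨k - 2, by omega⟩
  rw [Nat.add_sub_cancel]
  rcases Nat.eq_zero_or_pos n with rfl | hn
  · exact memD_two
  have hq_prime := prime_nth_prime n
  have hr_prime := prime_nth_prime (n + 1)
  have hqr : Coprime (nth Nat.Prime n) (nth Nat.Prime (n + 1)) :=
    (coprime_primes hq_prime hr_prime).2 (nth_prime_lt_nth_prime_iff.2 (lt_add_one n)).ne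
  obtain ⟨x, hx, hP, hq, hr⟩ :=
    exists_pos_dvd_add_three (primorial_pos n) hq_prime.pos hr_prime.pos
    (coprime_nth_prime_primorial le_rfl).symm (coprime_nth_prime_primorial n.le_succ).symm hqr
    (nth Nat.Prime n) (nth Nat.Prime n - 1) (nth Nat.Prime n + 1)
  exact memD_of_dvd hn hx hP hq hr

end PrimorialDifferences
end

section
/- Let k ≥ 1, let π_1, …, π_k be pairwise distinct primes, and let Π = ∏_{i=1}^k π_i. Then there exist integers x < y with gcd(x, Π) = gcd(y, Π) = 1 and gcd(z, Π) > 1 for all integers z with x < z < y, if and only if there exist residues a_i ∈ {1, …, π_i − 1}, i = 1, …, k, such that {a_i mod π_i}_{i=1}^k is a restricted covering of ⟨1⟩_{y−x−1}: every j ∈ {1, …, y−x−1} satisfies j ≡ a_i (mod π_i) for some i, and y − x ≢ a_i (mod π_i) for all i. -/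
/-!
If `-x ≡ r i (mod π i)` for every `i`, then `x + t` shares a factor with `∏ π i` exactly when `t`
lies in one of the classes `r i mod π i`. So `x` and `x + m` are consecutive integers coprime to
`∏ π i` precisely when the classes `r i` cover `1, …, m - 1` but neither `0` nor `m`; the condition
at `0` forces `r i ≠ 0`. Conversely, by the Chinese remainder theorem every choice of residues
`r i` arises from some `x`.
-/

namespace PrimorialDifferences

/-- `Covers π r a m` : the residue classes `r i mod π i`, `i = 1, …, k`, cover the sequence
`⟨a⟩_m = (a, a+1, …, a+m−1)` of `m` consecutive integers starting at `a`. -/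
def Covers {k : ℕ} (π : Fin k → ℕ) (r : Fin k → ℕ) (a : ℤ) (m : ℕ) : Prop :=
  ∀ j : ℕ, j < m → ∃ i : Fin k, a + (j : ℤ) ≡ (r i : ℤ) [ZMOD (π i : ℤ)]

/-- `RestrictedCovers π r a m` : the residue classes `r i mod π i` cover `⟨a⟩_m` and,
in addition, none of them covers `a - 1` or `a + m`. -/
def RestrictedCovers {k : ℕ} (π : Fin k → ℕ) (r : Fin k → ℕ) (a : ℤ) (m : ℕ) : Prop :=
  Covers π r a m ∧
    (∀ i : Fin k, ¬ (a - 1 ≡ (r i : ℤ) [ZMOD (π i : ℤ)])) ∧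
    (∀ i : Fin k, ¬ (a + (m : ℤ) ≡ (r i : ℤ) [ZMOD (π i : ℤ)]))

theorem exists_natCast_lt_modEq {n : ℕ} (hn : 0 < n) (a : ℤ) :
    ∃ r : ℕ, r < n ∧ a ≡ r [ZMOD n] := by
  have hn' : (0 : ℤ) < n := by exact_mod_cast hn
  refine ⟨(a % n).toNat, by have := Int.emod_lt_of_pos a hn'; omega, ?_⟩
  rw [Int.toNat_of_nonneg (Int.emod_nonneg a hn'.ne')]
  exact (Int.mod_modEq a n).symm

theorem exists_int_modEq_of_pairwise_coprime {ι : Type*} [Fintype ι] {n : ι → ℕ}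
    (hn : ∀ i, n i ≠ 0) (hco : Pairwise (Function.onFun Nat.Coprime n)) (a : ι → ℤ) :
    ∃ x : ℤ, ∀ i, x ≡ a i [ZMOD n i] := by
  choose s hs using fun i => exists_natCast_lt_modEq (Nat.pos_of_ne_zero (hn i)) (a i)
  obtain ⟨x, hx⟩ := Nat.chineseRemainderOfFinset s n Finset.univ (fun i _ => hn i)
    (fun i _ j _ hij => hco hij)
  exact ⟨x, fun i => (Int.natCast_modEq_iff.2 (hx i (Finset.mem_univ i))).trans (hs i).2.symm⟩

theorem dvd_add_iff_modEq_of_neg_modEq {n x r : ℤ} (hr : -x ≡ r [ZMOD n]) (t : ℤ) :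
    n ∣ x + t ↔ t ≡ r [ZMOD n] := by
  rw [← dvd_neg, neg_add, ← sub_eq_add_neg, ← Int.modEq_iff_dvd]
  exact ⟨fun h => h.trans hr, fun h => h.trans hr.symm⟩

section PrimeProduct

variable {ι : Type*} [Fintype ι] {π : ι → ℕ}

theorem gcd_prod_primes_eq_one_iff (hπ : ∀ i, (π i).Prime) (x : ℤ) :
    Int.gcd x ((∏ i, π i : ℕ) : ℤ) = 1 ↔ ∀ i, ¬ (π i : ℤ) ∣ x := by
  rw [← Int.isCoprime_iff_gcd_eq_one, Nat.cast_prod, IsCoprime.prod_right_iff]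
  refine forall_congr' fun i => ?_
  rw [isCoprime_comm, (Nat.prime_iff_prime_int.mp (hπ i)).coprime_iff_not_dvd]
  simp

theorem one_lt_gcd_prod_primes_iff (hπ : ∀ i, (π i).Prime) (x : ℤ) :
    1 < Int.gcd x ((∏ i, π i : ℕ) : ℤ) ↔ ∃ i, (π i : ℤ) ∣ x := by
  have hpos : 0 < Int.gcd x ((∏ i, π i : ℕ) : ℤ) :=
    Int.gcd_pos_of_ne_zero_right _ <| Int.natCast_ne_zero.2 <|
      Finset.prod_ne_zero_iff.2 fun i _ => (hπ i).ne_zero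
  have hne := (gcd_prod_primes_eq_one_iff hπ x).not
  simp only [not_forall, not_not] at hne
  rw [← hne]
  omega

variable {x : ℤ} {r : ι → ℤ}

theorem gcd_add_prod_primes_eq_one_iff (hπ : ∀ i, (π i).Prime)
    (hr : ∀ i, -x ≡ r i [ZMOD π i]) (t : ℤ) :
    Int.gcd (x + t) ((∏ i, π i : ℕ) : ℤ) = 1 ↔ ∀ i, ¬ t ≡ r i [ZMOD π i] := by
  simp only [gcd_prod_primes_eq_one_iff hπ, dvd_add_iff_modEq_of_neg_modEq (hr _)]

theorem one_lt_gcd_add_prod_primes_iff (hπ : ∀ i, (π i).Prime)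
    (hr : ∀ i, -x ≡ r i [ZMOD π i]) (t : ℤ) :
    1 < Int.gcd (x + t) ((∏ i, π i : ℕ) : ℤ) ↔ ∃ i, t ≡ r i [ZMOD π i] := by
  simp only [one_lt_gcd_prod_primes_iff hπ, dvd_add_iff_modEq_of_neg_modEq (hr _)]

end PrimeProduct

theorem covers_iff {k : ℕ} {π r : Fin k → ℕ} {a : ℤ} {n : ℕ} :
    Covers π r a n ↔ ∀ t : ℤ, a ≤ t → t < a + n → ∃ i, t ≡ r i [ZMOD π i] := by
  constructor
  · intro h t hat htn
    obtain ⟨j, rfl⟩ : ∃ j : ℕ, t = a + j := ⟨(t - a).toNat, by omega⟩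
    exact h j (by omega)
  · intro h j hj
    exact h (a + j) (by omega) (by omega)

def IsCoprimeGap (P : ℕ) (x : ℤ) (m : ℕ) : Prop :=
  Int.gcd x P = 1 ∧ Int.gcd (x + m) P = 1 ∧ ∀ z, x < z → z < x + m → 1 < Int.gcd z P

theorem isCoprimeGap_iff_restrictedCovers {k : ℕ} {π r : Fin k → ℕ} (hπ : ∀ i, (π i).Prime)
    {x : ℤ} (hr : ∀ i, -x ≡ r i [ZMOD π i]) {m : ℕ} (hm : 1 ≤ m) :
    IsCoprimeGap (∏ i, π i) x m ↔ RestrictedCovers π r 1 (m - 1) := by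
  have h0 : Int.gcd x ((∏ i, π i : ℕ) : ℤ) = 1 ↔ ∀ i, ¬ (1 - 1 : ℤ) ≡ r i [ZMOD π i] := by
    simpa using gcd_add_prod_primes_eq_one_iff hπ hr 0
  have hgap : (∀ z, x < z → z < x + m → 1 < Int.gcd z ((∏ i, π i : ℕ) : ℤ)) ↔
      ∀ t : ℤ, 1 ≤ t → t < 1 + ((m - 1 : ℕ) : ℤ) → ∃ i, t ≡ r i [ZMOD π i] := by
    constructor
    · intro h t h1 h2
      exact (one_lt_gcd_add_prod_primes_iff hπ hr t).1 (h (x + t) (by omega) (by omega))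
    · intro h z h1 h2
      simpa using (one_lt_gcd_add_prod_primes_iff hπ hr (z - x)).2 (h _ (by omega) (by omega))
  have hend : (1 : ℤ) + ((m - 1 : ℕ) : ℤ) = m := by omega
  rw [IsCoprimeGap, RestrictedCovers, covers_iff, h0, gcd_add_prod_primes_eq_one_iff hπ hr, hgap,
    hend]
  tauto

theorem consecutive_coprimes_iff_restricted_covering_general (k : ℕ)
    (π : Fin k → ℕ) (hπ : ∀ i, Nat.Prime (π i))
    (hdist : ∀ i j : Fin k, i ≠ j → π i ≠ π j) (m : ℕ) (hm : 1 ≤ m) :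
    (∃ x y : ℤ, x < y ∧ y - x = (m : ℤ) ∧
        Int.gcd x ((∏ i, π i : ℕ) : ℤ) = 1 ∧ Int.gcd y ((∏ i, π i : ℕ) : ℤ) = 1 ∧
        ∀ z : ℤ, x < z → z < y → 1 < Int.gcd z ((∏ i, π i : ℕ) : ℤ))
    ↔ (∃ r : Fin k → ℕ, (∀ i, 1 ≤ r i ∧ r i < π i) ∧
        RestrictedCovers π r 1 (m - 1)) := by
  constructor
  · rintro ⟨x, y, -, hyx, hx, hy, hgap⟩
    obtain rfl : y = x + m := by omega
    choose r hrlt hr using fun i => exists_natCast_lt_modEq (hπ i).pos (-x)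
    have hcov := (isCoprimeGap_iff_restrictedCovers hπ hr hm).1 ⟨hx, hy, hgap⟩
    refine ⟨r, fun i => ⟨Nat.one_le_iff_ne_zero.2 fun hri => hcov.2.1 i ?_, hrlt i⟩, hcov⟩
    simp [hri]
  · rintro ⟨r, -, hcov⟩
    obtain ⟨x, hx⟩ := exists_int_modEq_of_pairwise_coprime (fun i => (hπ i).ne_zero)
      (fun i j hij => (Nat.coprime_primes (hπ i) (hπ j)).2 (hdist i j hij)) fun i => -(r i : ℤ)
    have hr : ∀ i, -x ≡ r i [ZMOD π i] := fun i => by simpa using (hx i).neg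
    obtain ⟨hx, hy, hgap⟩ := (isCoprimeGap_iff_restrictedCovers hπ hr hm).2 hcov
    exact ⟨x, x + m, by omega, by ring, hx, hy, hgap⟩

theorem consecutive_coprimes_iff_restricted_covering (k : ℕ) (hk : 1 ≤ k)
    (π : Fin k → ℕ) (hπ : ∀ i, Nat.Prime (π i))
    (hdist : ∀ i j : Fin k, i ≠ j → π i ≠ π j) (m : ℕ) (hm : 1 ≤ m) :
    (∃ x y : ℤ, x < y ∧ y - x = (m : ℤ) ∧
        Int.gcd x ((∏ i, π i : ℕ) : ℤ) = 1 ∧ Int.gcd y ((∏ i, π i : ℕ) : ℤ) = 1 ∧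
        ∀ z : ℤ, x < z → z < y → 1 < Int.gcd z ((∏ i, π i : ℕ) : ℤ))
    ↔ (∃ r : Fin k → ℕ, (∀ i, 1 ≤ r i ∧ r i < π i) ∧
        RestrictedCovers π r 1 (m - 1)) :=
  consecutive_coprimes_iff_restricted_covering_general k π hπ hdist m hm

end PrimorialDifferences
end

section
/- For every k ≥ 1 there exists a restricted covering {a_i mod p_i}_{i=1}^k of ⟨1⟩_{2k−1} = (1, 2, …, 2k−1) using the first k primes; consequently, 2k ∈ D(k), i.e., 2k occurs as a difference between consecutive positive integers coprime to p_k#. -/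
/-!
The prime `2` takes the residue `1` and covers the odd numbers of `(0, 2k)`; the prime `3` takes
the residue `2γ`, with `γ ∈ {1, 2}` and `γ ≢ k (mod 3)`, and covers the `2j` with `j ≡ γ`. Each
remaining `2j`, `0 < j < k`, gets a prime `p > max j (k - j)` of its own with residue `2j`, which
then misses `0` and `2k`. Such an assignment exists by Hall's theorem: the `i`-th prime is at least
`2i + 1`, and only two thirds of the `j` are left. Finally, the Chinese remainder theorem gives
`x ≡ -aᵢ (mod pᵢ)` for all `i`, and then `x` and `x + 2k` are consecutive integers coprime to
`p_k#`.
-/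

namespace PrimorialDifferences

open Finset
open Nat (nth)

theorem two_mul_add_one_le_nth_prime (i : ℕ) : 2 * i + 1 ≤ nth Nat.Prime i := by
  induction i with
  | zero => simp [Nat.nth_prime_zero_eq_two]
  | succ i ih =>
    rcases i.eq_zero_or_pos with rfl | hi
    · simp [Nat.nth_prime_one_eq_three]
    have hlt : nth Nat.Prime i < nth Nat.Prime (i + 1) :=
      Nat.nth_strictMono Nat.infinite_setOfPred_prime (Nat.lt_succ_self i)
    have hodd_i := Nat.odd_iff.mp ((Nat.prime_nth_prime i).odd_of_ne_two (by omega))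
    have hodd_succ := Nat.odd_iff.mp ((Nat.prime_nth_prime (i + 1)).odd_of_ne_two (by omega))
    omega

theorem coprime_primorial_iff_s10 {n k : ℕ} :
    n.Coprime (primorial k) ↔ ∀ i : Fin k, ¬ nth Nat.Prime i ∣ n := by
  have hp : ∀ i, n.Coprime (nth Nat.Prime i) ↔ ¬ nth Nat.Prime i ∣ n := fun i =>
    Nat.coprime_comm.trans (Nat.prime_nth_prime i).coprime_iff_not_dvd
  simp only [primorial, Nat.coprime_prod_right_iff, mem_range, hp]
  exact ⟨fun h i => h i i.isLt, fun h i hi => h ⟨i, hi⟩⟩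

theorem exists_pos_add_modEq_zero {ι : Type*} (t : Finset ι) (s r : ι → ℕ)
    (hs : ∀ i ∈ t, s i ≠ 0) (hco : Set.Pairwise t (Function.onFun Nat.Coprime s)) :
    ∃ x, 0 < x ∧ ∀ i ∈ t, x + r i ≡ 0 [MOD s i] := by
  obtain ⟨x, hx⟩ := Nat.chineseRemainderOfFinset (fun i => (s i - 1) * r i) s t hs hco
  refine ⟨x + ∏ i ∈ t, s i, Nat.add_pos_right _ (prod_pos fun i hi => Nat.pos_of_ne_zero (hs i hi)),
    fun i hi => ?_⟩
  have hprod : ∏ i ∈ t, s i ≡ 0 [MOD s i] := Nat.modEq_zero_iff_dvd.2 (dvd_prod_of_mem s hi)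
  calc x + ∏ i ∈ t, s i + r i ≡ (s i - 1) * r i + 0 + r i [MOD s i] :=
        ((hx i hi).add hprod).add_right _
    _ = s i * r i := by
        rw [add_zero, ← add_one_mul, Nat.sub_add_cancel (Nat.one_le_iff_ne_zero.2 (hs i hi))]
    _ ≡ 0 [MOD s i] := Nat.modEq_zero_iff_dvd.2 (dvd_mul_right _ _)

theorem pairwise_coprime_nth_prime (k : ℕ) :
    Set.Pairwise ((univ : Finset (Fin k)) : Set (Fin k))
      (Function.onFun Nat.Coprime fun i => nth Nat.Prime i) :=
  fun _ _ _ _ hij => (Nat.coprime_primes (Nat.prime_nth_prime _) (Nat.prime_nth_prime _)).2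
    fun h => hij (Fin.ext (Nat.nth_injective Nat.infinite_setOfPred_prime h))

theorem restrictedCovers_one_iff {k m : ℕ} (hm : 1 ≤ m) (π r : Fin k → ℕ) :
    RestrictedCovers π r 1 (m - 1) ↔
      (∀ t ∈ Ioo 0 m, ∃ i, t ≡ r i [MOD π i]) ∧ (∀ i, ¬ 0 ≡ r i [MOD π i]) ∧
        ∀ i, ¬ m ≡ r i [MOD π i] := by
  have hcast : ∀ j : ℕ, (1 : ℤ) + j = ((1 + j : ℕ) : ℤ) := by simp
  simp only [RestrictedCovers, Covers, hcast, sub_self, ← Nat.cast_zero (R := ℤ),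
    Int.natCast_modEq_iff, mem_Ioo]
  refine and_congr ⟨fun h t ht => ?_, fun h j hj => h (1 + j) (by omega)⟩
    (by rw [Nat.add_sub_cancel' hm])
  simpa [show 1 + (t - 1) = t by omega] using h (t - 1) (by omega)

theorem memD_of_restrictedCovers {k m : ℕ} (hm : 1 ≤ m) {r : Fin k → ℕ}
    (h : RestrictedCovers (fun i : Fin k => nth Nat.Prime i) r 1 (m - 1)) : memD k m := by
  obtain ⟨hcov, h0, hm⟩ := (restrictedCovers_one_iff hm _ _).1 h
  obtain ⟨x, hx_pos, hx⟩ := exists_pos_add_modEq_zero univ (fun i : Fin k => nth Nat.Prime i) r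
    (fun i _ => (Nat.prime_nth_prime i).ne_zero) (pairwise_coprime_nth_prime k)
  have key : ∀ t, (x + t).Coprime (primorial k) ↔ ∀ i : Fin k, ¬ t ≡ r i [MOD nth Nat.Prime i] :=
    fun t => coprime_primorial_iff_s10.trans <| forall_congr' fun i => not_congr <|
      Nat.modEq_zero_iff_dvd.symm.trans
        ⟨fun h => Nat.ModEq.add_left_cancel' x (h.trans (hx i (mem_univ i)).symm),
          fun h => (h.add_left x).trans (hx i (mem_univ i))⟩
  refine ⟨x, hx_pos, (key 0).2 h0, (key m).2 hm, fun j hj hjm => ?_⟩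
  obtain ⟨i, hi⟩ := hcov j (mem_Ioo.2 ⟨hj, hjm⟩)
  have hpos : 0 < Nat.gcd (x + j) (primorial k) :=
    Nat.gcd_pos_of_pos_right _ (prod_pos fun i _ => (Nat.prime_nth_prime i).pos)
  have hne : Nat.gcd (x + j) (primorial k) ≠ 1 := fun h1 => (key j).1 h1 i hi
  omega

theorem exists_injOn_of_card_filter_le {ι : Type*} (s : Finset ι) (g : ι → ℕ) (n : ℕ)
    (h : ∀ a, #{x ∈ s | a ≤ g x} ≤ n - a) :
    ∃ f : ι → ℕ, Set.InjOn f s ∧ ∀ x ∈ s, g x ≤ f x ∧ f x < n := by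
  classical
  -- The neighbourhoods `[g x, n)` are nested, so Hall's condition only needs checking on the
  -- up-sets `{x | a ≤ g x}`.
  have hall : ∀ t : Finset s, #t ≤ #(t.biUnion fun x => Ico (g x) n) := by
    intro t
    rcases t.eq_empty_or_nonempty with rfl | ht
    · simp
    obtain ⟨x₀, hx₀, hmin⟩ := t.exists_min_image (fun x => g x) ht
    calc #t ≤ #{x ∈ s | g x₀ ≤ g x} :=
          card_le_card_of_injOn Subtype.val (fun x hx => by simp [hmin x hx])
            Subtype.val_injective.injOn
      _ ≤ n - g x₀ := h _
      _ = #(Ico (g x₀) n) := (Nat.card_Ico _ _).symm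
      _ ≤ _ := card_le_card (subset_biUnion_of_mem (fun x : s => Ico (g x) n) hx₀)
  obtain ⟨f, hf_inj, hf⟩ := (all_card_le_biUnion_card_iff_exists_injective _).1 hall
  refine ⟨fun x => if hx : x ∈ s then f ⟨x, hx⟩ else 0, fun x hx y hy hxy => ?_, fun x hx => ?_⟩
  · simp only [dif_pos (mem_coe.1 hx), dif_pos (mem_coe.1 hy)] at hxy
    exact congrArg Subtype.val (hf_inj hxy)
  · simpa [dif_pos hx] using hf ⟨x, hx⟩

theorem card_filter_Icc_mod_three_ne {γ : ℕ} (hγ : γ = 1 ∨ γ = 2) (n : ℕ) :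
    #{j ∈ Icc 1 n | j % 3 ≠ γ} = n - (n + 3 - γ) / 3 := by
  induction n with
  | zero => rcases hγ with rfl | rfl <;> rfl
  | succ n ih =>
    rw [← insert_Icc_right_eq_Icc_add_one (by omega), filter_insert]
    split_ifs with h
    · rw [card_insert_of_notMem (by simp), ih]
      omega
    · rw [ih]
      omega

/-- By `two_mul_add_one_le_nth_prime`, the `i`-th prime exceeds `max j (k - j)` once
`matchThreshold k j ≤ i`; the indices `0` and `1` are kept for the primes `2` and `3`. -/
def matchThreshold (k j : ℕ) : ℕ := max 2 ((max j (k - j) + 1) / 2)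

theorem card_filter_le_matchThreshold {k γ : ℕ} (hγ : γ = 1 ∨ γ = 2) (hγk : γ ≠ k % 3) (a : ℕ) :
    #{j ∈ {j ∈ Icc 1 (k - 1) | j % 3 ≠ γ} | a ≤ matchThreshold k j} ≤ k - a := by
  set U := {j ∈ Icc 1 (k - 1) | j % 3 ≠ γ}
  have hU : #U = k - 1 - (k - 1 + 3 - γ) / 3 := card_filter_Icc_mod_three_ne hγ (k - 1)
  by_cases ha : a ≤ 2 ∨ 4 * a ≤ k + 3
  · calc _ ≤ #U := card_filter_le _ _
      _ ≤ k - a := by omega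
  -- Otherwise the intervals below are disjoint and `a ≤ matchThreshold k j` confines `j` to them.
  have hsub : {j ∈ U | a ≤ matchThreshold k j} ⊆
      {j ∈ Icc 1 (k + 1 - 2 * a) | j % 3 ≠ γ} ∪ {j ∈ U | 2 * a - 1 ≤ j} := by
    intro j hj
    rw [mem_filter, mem_filter] at hj
    simp only [U, matchThreshold, mem_filter, mem_Icc, mem_union] at hj ⊢
    omega
  have hlow := card_filter_Icc_mod_three_ne hγ (k + 1 - 2 * a)
  have hmid : #{j ∈ U | ¬ 2 * a - 1 ≤ j} =
      min (2 * a - 2) (k - 1) - (min (2 * a - 2) (k - 1) + 3 - γ) / 3 := by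
    rw [← card_filter_Icc_mod_three_ne hγ]
    congr 1
    ext j
    simp only [U, mem_filter, mem_Icc]
    omega
  have hsplit := card_filter_add_card_filter_not (s := U) (fun j => 2 * a - 1 ≤ j)
  calc _ ≤ _ := card_le_card hsub
    _ ≤ _ := card_union_le _ _
    _ ≤ k - a := by omega

theorem exists_not_modEq_zero_not_modEq_two_mul {p : ℕ} (hp : 2 ≤ p) (n : ℕ) :
    ∃ c, ¬ c ≡ 0 [MOD p] ∧ ¬ c ≡ 2 * n [MOD p] := by
  rcases hp.eq_or_lt with rfl | hp3
  · exact ⟨1, by unfold Nat.ModEq; omega⟩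
  refine ⟨if 2 * n % p = 1 then 2 else 1, ?_⟩
  simp only [Nat.ModEq, Nat.zero_mod]
  have h1 : 1 % p = 1 := Nat.mod_eq_of_lt (by omega)
  have h2 : 2 % p = 2 := Nat.mod_eq_of_lt hp3
  split_ifs <;> omega

theorem not_dvd_two_mul_of_lt {p n : ℕ} (hp : p.Prime) (hp2 : p ≠ 2) (hn : 0 < n)
    (hnp : n < p) : ¬ p ∣ 2 * n := by
  intro h
  rcases hp.dvd_mul.1 h with h | h
  · exact hp2 ((Nat.prime_dvd_prime_iff_eq hp Nat.prime_two).1 h)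
  · exact absurd (Nat.le_of_dvd hn h) (by omega)

theorem not_modEq_zero_not_modEq_of_lt {p j k : ℕ} (hp : p.Prime) (hp2 : p ≠ 2) (hj : 0 < j)
    (hjk : j < k) (hjp : j < p) (hkjp : k - j < p) :
    ¬ 2 * j ≡ 0 [MOD p] ∧ ¬ 2 * j ≡ 2 * k [MOD p] := by
  refine ⟨fun h => not_dvd_two_mul_of_lt hp hp2 hj hjp (Nat.modEq_zero_iff_dvd.1 h), fun h => ?_⟩
  have hdvd := (Nat.modEq_iff_dvd' (by omega)).1 h
  rw [show 2 * k - 2 * j = 2 * (k - j) by omega] at hdvd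
  exact not_dvd_two_mul_of_lt hp hp2 (by omega) hkjp hdvd

theorem exists_restrictedCovers_of_assignment {k n : ℕ} (hn : 1 ≤ n) (σ : ℕ → ℕ)
    (hσ : ∀ t ∈ Ioo 0 (2 * n), σ t < k ∧ ¬ t ≡ 0 [MOD nth Nat.Prime (σ t)] ∧
      ¬ t ≡ 2 * n [MOD nth Nat.Prime (σ t)])
    (hcons : ∀ t ∈ Ioo 0 (2 * n), ∀ t' ∈ Ioo 0 (2 * n), σ t = σ t' →
      t ≡ t' [MOD nth Nat.Prime (σ t)]) :
    ∃ r : Fin k → ℕ, (∀ i, r i < nth Nat.Prime i) ∧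
      RestrictedCovers (fun i : Fin k => nth Nat.Prime i) r 1 (2 * n - 1) := by
  classical
  choose d hd using fun i =>
    exists_not_modEq_zero_not_modEq_two_mul (Nat.prime_nth_prime i).two_le n
  let c : ℕ → ℕ := fun i => if h : ∃ t ∈ Ioo 0 (2 * n), σ t = i then h.choose else d i
  have hc : ∀ t ∈ Ioo 0 (2 * n), c (σ t) ≡ t [MOD nth Nat.Prime (σ t)] := by
    intro t ht
    have h : ∃ t' ∈ Ioo 0 (2 * n), σ t' = σ t := ⟨t, ht, rfl⟩
    obtain ⟨ht', he⟩ := h.choose_spec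
    simp only [c, dif_pos h]
    have := hcons _ ht' _ ht he
    rwa [he] at this
  have hgood : ∀ i, ¬ c i ≡ 0 [MOD nth Nat.Prime i] ∧ ¬ c i ≡ 2 * n [MOD nth Nat.Prime i] := by
    intro i
    by_cases h : ∃ t ∈ Ioo 0 (2 * n), σ t = i
    · obtain ⟨t, ht, rfl⟩ := h
      exact ⟨fun h0 => (hσ t ht).2.1 ((hc t ht).symm.trans h0),
        fun h2 => (hσ t ht).2.2 ((hc t ht).symm.trans h2)⟩
    · simpa only [c, dif_neg h] using hd i
  refine ⟨fun i => c i % nth Nat.Prime i, fun i => Nat.mod_lt _ (Nat.prime_nth_prime i).pos,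
    (restrictedCovers_one_iff (by omega) _ _).2 ⟨fun t ht => ?_, fun i h0 => ?_, fun i h2 => ?_⟩⟩
  · exact ⟨⟨σ t, (hσ t ht).1⟩, (hc t ht).symm.trans (Nat.mod_modEq _ _).symm⟩
  · exact (hgood i).1 (h0.trans (Nat.mod_modEq _ _)).symm
  · exact (hgood i).2 (h2.trans (Nat.mod_modEq _ _)).symm

theorem exists_restrictedCovers {k : ℕ} (hk : 1 ≤ k) :
    ∃ r : Fin k → ℕ, (∀ i, r i < nth Nat.Prime i) ∧
      RestrictedCovers (fun i : Fin k => nth Nat.Prime i) r 1 (2 * k - 1) := by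
  obtain ⟨γ, hγ, hγk⟩ : ∃ γ, (γ = 1 ∨ γ = 2) ∧ γ ≠ k % 3 :=
    ⟨if k % 3 = 1 then 2 else 1, by split_ifs <;> omega⟩
  set U := {j ∈ Icc 1 (k - 1) | j % 3 ≠ γ}
  obtain ⟨f, hf_inj, hf⟩ :=
    exists_injOn_of_card_filter_le U _ k (card_filter_le_matchThreshold hγ hγk)
  have hmatch : ∀ j ∈ U, 2 ≤ f j ∧ f j < k ∧ ¬ 2 * j ≡ 0 [MOD nth Nat.Prime (f j)] ∧
      ¬ 2 * j ≡ 2 * k [MOD nth Nat.Prime (f j)] := by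
    intro j hj
    obtain ⟨hle, hlt⟩ := hf j hj
    simp only [U, mem_filter, mem_Icc] at hj
    have hp := two_mul_add_one_le_nth_prime (f j)
    simp only [matchThreshold, max_le_iff] at hle
    exact ⟨hle.1, hlt, not_modEq_zero_not_modEq_of_lt (Nat.prime_nth_prime _) (by omega)
      (by omega) (by omega) (by omega) (by omega)⟩
  have hP0 := Nat.nth_prime_zero_eq_two
  have hP1 := Nat.nth_prime_one_eq_three
  refine exists_restrictedCovers_of_assignment hk
    (fun t => if t % 2 = 1 then 0 else if t / 2 % 3 = γ then 1 else f (t / 2))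
    (fun t ht => ?_) (fun t ht t' ht' h => ?_)
  · rw [mem_Ioo] at ht
    split_ifs
    · simp only [hP0, Nat.ModEq]
      omega
    · simp only [hP1, Nat.ModEq]
      omega
    · obtain ⟨-, hk', h0, h2k⟩ := hmatch (t / 2) (by simp only [U, mem_filter, mem_Icc]; omega)
      rw [show 2 * (t / 2) = t by omega] at h0 h2k
      exact ⟨hk', h0, h2k⟩
  · rw [mem_Ioo] at ht ht'
    have hU : ∀ {t}, 0 < t → t < 2 * k → t % 2 ≠ 1 → t / 2 % 3 ≠ γ → t / 2 ∈ U := fun _ _ _ _ => by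
      simp only [U, mem_filter, mem_Icc]
      omega
    -- Points of different kinds go to different primes because `f ≥ 2` on `U`.
    split_ifs at h ⊢ <;> first
      | (simp only [hP0, hP1, Nat.ModEq]; omega)
      | (have := (hmatch _ (hU ht.1 ht.2 ‹_› ‹_›)).1; omega)
      | (have := (hmatch _ (hU ht'.1 ht'.2 ‹_› ‹_›)).1; omega)
      | rw [show t = t' by have := hf_inj (hU ht.1 ht.2 ‹_› ‹_›) (hU ht'.1 ht'.2 ‹_› ‹_›) h; omega]

theorem exists_restricted_covering_and_two_k_mem_D (k : ℕ) (hk : 1 ≤ k) :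
    (∃ r : Fin k → ℕ, (∀ i : Fin k, r i < Nat.nth Nat.Prime i) ∧
      RestrictedCovers (fun i : Fin k => Nat.nth Nat.Prime i) r 1 (2 * k - 1)) ∧
    memD k (2 * k) := by
  obtain ⟨r, hr, hcov⟩ := exists_restrictedCovers hk
  exact ⟨⟨r, hr, hcov⟩, memD_of_restrictedCovers (by omega) hcov⟩

end PrimorialDifferences
end

section
/- For every k ≥ 1 and every n with 1 ≤ n ≤ k, the number 2n occurs as a difference between consecutive positive integers coprime to p_k#; that is, 2n ∈ D(k). Equivalently, 2k ≤ N_min(k), where N_min(k) denotes the greatest even number N such that 2n ∈ D(k) for all n ≤ N/2. -/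
/-!
Take `x` odd, so that the prime `2` divides every `x + j` with `j` odd. Each even offset `2 * m`,
`0 < m < n`, gets its own odd prime `p` with `x ≡ -2 * m [MOD p]`; for `p` to divide neither `x`
nor `x + 2 * n` we need `m ≢ 0, n [MOD p]`. An odd prime `p ≤ n + 1` takes `m = p - 1`, or
`m = p - 2` when `p ∣ n + 1`, and distinct primes take distinct values by parity. A prime
`p > n + 1` may take any `0 < m < n`, and since there are `n` primes in all, enough of them are
left for the remaining offsets. The Chinese remainder theorem then produces `x`.
-/

namespace PrimorialDifferences

open Finset

theorem exists_surjOn_of_card_le {α β : Type*} (s : Finset α)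
    (t : Finset β) (b : β) (h : #t ≤ #s) :
    ∃ f : α → β, (∀ a ∈ s, f a = b ∨ f a ∈ t) ∧ ∀ y ∈ t, ∃ a ∈ s, f a = y := by
  classical
  induction t using Finset.induction_on generalizing s with
  | empty => exact ⟨fun _ => b, fun _ _ => Or.inl rfl, by simp⟩
  | insert y t hyt ih =>
    rw [card_insert_of_notMem hyt] at h
    obtain ⟨a, ha⟩ : s.Nonempty := card_pos.mp (by omega)
    obtain ⟨f, hmaps, hsurj⟩ := ih (s.erase a) (by rw [card_erase_of_mem ha]; omega)
    refine ⟨Function.update f a y, fun a' ha' => ?_, ?_⟩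
    · by_cases h' : a' = a
      · simp [h']
      · rw [Function.update_of_ne h']
        exact (hmaps a' (mem_erase.mpr ⟨h', ha'⟩)).imp_right mem_insert_of_mem
    · simp only [mem_insert, forall_eq_or_imp]
      refine ⟨⟨a, ha, by simp⟩, fun z hz => ?_⟩
      obtain ⟨a', ha', rfl⟩ := hsurj z hz
      exact ⟨a', mem_of_mem_erase ha', Function.update_of_ne (ne_of_mem_erase ha') _ _⟩

theorem coprime_prod_iff_forall_not_dvd {S : Finset ℕ} (hS : ∀ p ∈ S, p.Prime) (y : ℕ) :
    Nat.Coprime y (∏ p ∈ S, p) ↔ ∀ p ∈ S, ¬ p ∣ y := by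
  rw [Nat.coprime_prod_right_iff]
  exact forall₂_congr fun p hp => by rw [Nat.coprime_comm, (hS p hp).coprime_iff_not_dvd]

theorem exists_pos_forall_dvd_add {S : Finset ℕ} (hS : ∀ p ∈ S, p.Prime) (c : ℕ → ℕ) :
    ∃ x, 0 < x ∧ ∀ p ∈ S, p ∣ x + c p := by
  have hpair : Set.Pairwise (S : Set ℕ) (Function.onFun Nat.Coprime id) := fun p hp q hq hpq =>
    (Nat.coprime_primes (hS p hp) (hS q hq)).mpr hpq
  -- `c p * (p - 1) ≡ -c p [MOD p]`
  obtain ⟨y, hy⟩ := Nat.chineseRemainderOfFinset (fun p => c p * (p - 1)) id S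
    (fun p hp => (hS p hp).ne_zero) hpair
  have hprod : 0 < ∏ p ∈ S, p := prod_pos fun p hp => (hS p hp).pos
  refine ⟨y + ∏ p ∈ S, p, by omega, fun p hp => Nat.modEq_zero_iff_dvd.mp ?_⟩
  have hp1 : p - 1 + 1 = p := Nat.sub_add_cancel (hS p hp).one_le
  calc y + ∏ q ∈ S, q + c p ≡ c p * (p - 1) + 0 + c p [MOD p] :=
        ((hy p hp).add (Nat.modEq_zero_iff_dvd.mpr (dvd_prod_of_mem id hp))).add_right _
    _ = c p * p := by rw [add_zero, ← hp1, mul_add_one, Nat.add_sub_cancel]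
    _ ≡ 0 [MOD p] := Nat.modEq_zero_iff_dvd.mpr (dvd_mul_left p _)

theorem dvd_add_iff_modEq_of_dvd_add {p x r w : ℕ} (h : p ∣ x + r) :
    p ∣ x + w ↔ w ≡ r [MOD p] := by
  rw [← Nat.modEq_zero_iff_dvd] at h ⊢
  exact ⟨fun hw => Nat.ModEq.add_left_cancel' x (hw.trans h.symm), fun hw => (hw.add_left x).trans h⟩

/-- If `p ∣ x + r`, then `p` divides neither `x` nor `x + m`. -/
def Admissible (m p r : ℕ) : Prop := ¬ r ≡ 0 [MOD p] ∧ ¬ r ≡ m [MOD p]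

theorem admissible_of_lt {m p r : ℕ} (hr : 0 < r) (hrp : r < p) (hmp : m < p) (hrm : r ≠ m) :
    Admissible m p r := by
  unfold Admissible Nat.ModEq
  rw [Nat.mod_eq_of_lt hrp, Nat.mod_eq_of_lt hmp, Nat.zero_mod]
  exact ⟨hr.ne', hrm⟩

theorem Admissible.two_mul {m p r : ℕ} (hp : p.Prime) (hp2 : p ≠ 2) (h : Admissible m p r) :
    Admissible (2 * m) p (2 * r) := by
  have hcop : Nat.gcd p 2 = 1 := (Nat.coprime_primes hp Nat.prime_two).mpr hp2
  exact ⟨fun h0 => h.1 (Nat.ModEq.cancel_left_of_coprime hcop (by simpa using h0)),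
    fun hm => h.2 (Nat.ModEq.cancel_left_of_coprime hcop hm)⟩

section SmallPrimes

variable {n p : ℕ}

def smallPrimeTarget (n p : ℕ) : ℕ := if p ∣ n + 1 then p - 2 else p - 1

theorem smallPrimeTarget_mem_Ico (hp : p.Prime) (hp2 : p ≠ 2) (hpn : p ≤ n + 1) :
    smallPrimeTarget n p ∈ Ico 1 n := by
  have h3 : 3 ≤ p := (hp.two_le).lt_of_ne' hp2
  unfold smallPrimeTarget
  split_ifs with hdvd
  · rw [mem_Ico]; omega
  · have : p ≠ n + 1 := fun h => hdvd (h ▸ dvd_rfl)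
    rw [mem_Ico]; omega

theorem admissible_smallPrimeTarget (hp : p.Prime) (hp2 : p ≠ 2) (hpn : p ≤ n + 1) :
    Admissible n p (smallPrimeTarget n p) := by
  have h3 : 3 ≤ p := (hp.two_le).lt_of_ne' hp2
  have hmem := mem_Ico.mp (smallPrimeTarget_mem_Ico hp hp2 hpn)
  refine ⟨fun h0 => ?_, fun hn => ?_⟩
  · exact Nat.not_dvd_of_pos_of_lt hmem.1 (by unfold smallPrimeTarget; split_ifs <;> omega)
      (Nat.modEq_zero_iff_dvd.mp h0)
  unfold smallPrimeTarget at hn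
  split_ifs at hn with hdvd
  · have h1 : p - 2 + 1 ≡ 0 [MOD p] := (hn.add_right 1).trans (Nat.modEq_zero_iff_dvd.mpr hdvd)
    exact Nat.not_dvd_of_pos_of_lt (by omega) (by omega) (Nat.modEq_zero_iff_dvd.mp h1)
  · refine hdvd (Nat.modEq_zero_iff_dvd.mp ?_)
    calc n + 1 ≡ p - 1 + 1 [MOD p] := hn.symm.add_right 1
      _ = p := by omega
      _ ≡ 0 [MOD p] := Nat.modEq_zero_iff_dvd.mpr dvd_rfl

theorem smallPrimeTarget_injOn : Set.InjOn (smallPrimeTarget n) {p | Odd p} := by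
  rintro p ⟨a, rfl⟩ q ⟨b, rfl⟩ h
  unfold smallPrimeTarget at h
  split_ifs at h <;> omega

end SmallPrimes

section Covering

variable {n : ℕ} {S : Finset ℕ}

theorem card_uncovered_le_card_filter_lt (hS : ∀ p ∈ S, p.Prime) (hn : n ≤ #S) :
    #(Ico 1 n \ ((S.erase 2).filter (· ≤ n + 1)).image (smallPrimeTarget n)) ≤
      #(S.filter (n + 1 < ·)) := by
  classical
  set small := (S.erase 2).filter (· ≤ n + 1)
  have hsmall : ∀ p ∈ small, p.Prime ∧ p ≠ 2 ∧ p ≤ n + 1 := fun p hp => by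
    obtain ⟨hpS, hpn⟩ := mem_filter.mp hp
    exact ⟨hS p (mem_of_mem_erase hpS), ne_of_mem_erase hpS, hpn⟩
  have himage : #(small.image (smallPrimeTarget n)) = #small :=
    card_image_of_injOn (smallPrimeTarget_injOn.mono fun p hp =>
      (hsmall p hp).1.odd_of_ne_two (hsmall p hp).2.1)
  have hsub : small.image (smallPrimeTarget n) ⊆ Ico 1 n := fun m hm => by
    obtain ⟨p, hp, rfl⟩ := mem_image.mp hm
    exact smallPrimeTarget_mem_Ico (hsmall p hp).1 (hsmall p hp).2.1 (hsmall p hp).2.2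
  have hsplit : #(S.filter (· ≤ n + 1)) + #(S.filter (n + 1 < ·)) = #S := by
    simpa only [not_le] using card_filter_add_card_filter_not (s := S) (· ≤ n + 1)
  have herase : #(S.filter (· ≤ n + 1)) ≤ #small + 1 := by
    simpa [small, filter_erase] using pred_card_le_card_erase (s := S.filter (· ≤ n + 1)) (a := 2)
  rw [card_sdiff_of_subset hsub, himage, Nat.card_Ico]
  omega

theorem exists_admissible_covering_half (hS : ∀ p ∈ S, p.Prime) (hn : n ≤ #S) :
    ∃ d : ℕ → ℕ, (∀ p ∈ S, p ≠ 2 → Admissible n p (d p)) ∧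
      ∀ m ∈ Ico 1 n, ∃ p ∈ S, p ≠ 2 ∧ d p = m := by
  classical
  set covered := ((S.erase 2).filter (· ≤ n + 1)).image (smallPrimeTarget n)
  obtain ⟨f, hf, hfsurj⟩ := exists_surjOn_of_card_le (S.filter (n + 1 < ·)) (Ico 1 n \ covered)
    (n + 1) (card_uncovered_le_card_filter_lt hS hn)
  refine ⟨fun p => if p ≤ n + 1 then smallPrimeTarget n p else f p, fun p hp hp2 => ?_,
    fun m hm => ?_⟩
  · dsimp only
    split_ifs with hpn
    · exact admissible_smallPrimeTarget (hS p hp) hp2 hpn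
    · rcases hf p (mem_filter.mpr ⟨hp, by omega⟩) with hfp | hfp
      · exact admissible_of_lt (by omega) (by omega) (by omega) (by omega)
      · have := mem_Ico.mp (mem_sdiff.mp hfp).1
        exact admissible_of_lt (by omega) (by omega) (by omega) (by omega)
  · by_cases hmc : m ∈ covered
    · obtain ⟨p, hp, rfl⟩ := mem_image.mp hmc
      obtain ⟨hpS, hpn⟩ := mem_filter.mp hp
      exact ⟨p, mem_of_mem_erase hpS, ne_of_mem_erase hpS, if_pos hpn⟩
    · obtain ⟨p, hp, rfl⟩ := hfsurj m (mem_sdiff.mpr ⟨hm, hmc⟩)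
      obtain ⟨hpS, hpn⟩ := mem_filter.mp hp
      have := mem_Ico.mp hm
      exact ⟨p, hpS, by omega, if_neg (by omega)⟩

theorem exists_admissible_covering (hS : ∀ p ∈ S, p.Prime) (h2 : 2 ∈ S)
    (hn : n ≤ #S) :
    ∃ c : ℕ → ℕ, (∀ p ∈ S, Admissible (2 * n) p (c p)) ∧
      ∀ j, 0 < j → j < 2 * n → ∃ p ∈ S, c p ≡ j [MOD p] := by
  obtain ⟨d, hd, hcover⟩ := exists_admissible_covering_half hS hn
  refine ⟨fun p => if p = 2 then 1 else 2 * d p, fun p hp => ?_, fun j hj0 hjn => ?_⟩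
  · dsimp only
    split_ifs with hp2
    · subst hp2
      unfold Admissible Nat.ModEq
      omega
    · exact (hd p hp hp2).two_mul (hS p hp) hp2
  · rcases Nat.even_or_odd' j with ⟨m, rfl | rfl⟩
    · obtain ⟨p, hp, hp2, hdp⟩ := hcover m (mem_Ico.mpr ⟨by omega, by omega⟩)
      exact ⟨p, hp, by simp [hp2, hdp, Nat.ModEq.refl]⟩
    · refine ⟨2, h2, ?_⟩
      show 1 % 2 = (2 * m + 1) % 2
      omega

theorem exists_coprime_gap (hS : ∀ p ∈ S, p.Prime) (h2 : 2 ∈ S)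
    (hn : n ≤ #S) :
    ∃ x, 0 < x ∧ Nat.Coprime x (∏ p ∈ S, p) ∧ Nat.Coprime (x + 2 * n) (∏ p ∈ S, p) ∧
      ∀ j, 0 < j → j < 2 * n → ¬ Nat.Coprime (x + j) (∏ p ∈ S, p) := by
  obtain ⟨c, hc, hcover⟩ := exists_admissible_covering hS h2 hn
  obtain ⟨x, hx, hxc⟩ := exists_pos_forall_dvd_add hS c
  have key : ∀ p ∈ S, ∀ w, p ∣ x + w ↔ w ≡ c p [MOD p] := fun p hp _ =>
    dvd_add_iff_modEq_of_dvd_add (hxc p hp)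
  simp only [coprime_prod_iff_forall_not_dvd hS]
  refine ⟨x, hx, fun p hp h => (hc p hp).1 ?_, fun p hp h => (hc p hp).2 ?_, fun j hj0 hjn h => ?_⟩
  · exact ((key p hp 0).mp h).symm
  · exact ((key p hp _).mp h).symm
  · obtain ⟨p, hp, hcp⟩ := hcover j hj0 hjn
    exact h p hp ((key p hp j).mpr hcp.symm)

end Covering

noncomputable def firstPrimes (k : ℕ) : Finset ℕ := (range k).image (Nat.nth Nat.Prime)

theorem prime_of_mem_firstPrimes {k p : ℕ} (hp : p ∈ firstPrimes k) : p.Prime := by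
  obtain ⟨i, -, rfl⟩ := mem_image.mp hp
  exact Nat.prime_nth_prime i

theorem card_firstPrimes (k : ℕ) : #(firstPrimes k) = k := by
  rw [firstPrimes, card_image_of_injective _ (Nat.nth_injective Nat.infinite_setOfPred_prime),
    card_range]

theorem two_mem_firstPrimes {k : ℕ} (hk : 1 ≤ k) : 2 ∈ firstPrimes k :=
  mem_image.mpr ⟨0, mem_range.mpr hk, Nat.nth_prime_zero_eq_two⟩

theorem primorial_eq_prod_firstPrimes (k : ℕ) : primorial k = ∏ p ∈ firstPrimes k, p := by
  rw [primorial, firstPrimes,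
    prod_image fun _ _ _ _ h => Nat.nth_injective Nat.infinite_setOfPred_prime h]

theorem two_n_mem_D_of_le_general (k n : ℕ) (hk : 1 ≤ k) (hnk : n ≤ k) :
    memD k (2 * n) := by
  obtain ⟨x, hx, hx0, hxn, hgap⟩ := exists_coprime_gap (fun _ => prime_of_mem_firstPrimes)
    (two_mem_firstPrimes hk) (hnk.trans (card_firstPrimes k).ge)
  rw [← primorial_eq_prod_firstPrimes] at hx0 hxn hgap
  refine ⟨x, hx, hx0, hxn, fun j hj0 hjn => ?_⟩
  have hpos : 0 < primorial k := by
    rw [primorial_eq_prod_firstPrimes]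
    exact prod_pos fun _ hp => (prime_of_mem_firstPrimes hp).pos
  exact lt_of_le_of_ne (Nat.gcd_pos_of_pos_right _ hpos) (Ne.symm (hgap j hj0 hjn))

theorem two_n_mem_D_of_le (k n : ℕ) (hk : 1 ≤ k) (hn : 1 ≤ n) (hnk : n ≤ k) :
    memD k (2 * n) :=
  two_n_mem_D_of_le_general k n hk hnk

end PrimorialDifferences
end

section
/- Let m ≥ 1, k ≥ 2, let π_1 = 2 and let π_2, …, π_k be pairwise distinct odd primes. Then there exist a ∈ ℤ and residues a_i ∈ {0, …, π_i − 1}, i = 2, …, k, such that {a_i mod π_i}_{i=2}^k covers ⟨a⟩_m, if and only if there exist b ∈ ℤ, b_1 ∈ {0, 1}, and residues b_i ∈ {0, …, π_i − 1}, i = 2, …, k, such that {b_i mod π_i}_{i=1}^k covers ⟨b⟩_{2m+1}. -/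
/-!
Doubling a covered interval `a, …, a + m - 1` gives the even terms of `⟨2a - 1⟩_{2m+1}`, and the
odd terms are covered by the class `1 mod 2`. Conversely, the terms of `⟨b⟩_{2m+1}` missed by the
class `b₁ mod 2` contain a progression `x, x + 2, …, x + 2(m - 1)` covered by the odd moduli alone;
multiplying it by an inverse `c` of `2` modulo all of them turns it into an interval `cx, …, cx + m - 1`.
-/

namespace PrimorialDifferences

def CoversProgression {n : ℕ} (π r : Fin n → ℕ) (a d : ℤ) (m : ℕ) : Prop :=
  ∀ j : ℕ, j < m → ∃ i : Fin n, a + d * j ≡ r i [ZMOD π i]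

section

variable {n : ℕ} {π r : Fin n → ℕ} {m : ℕ}

theorem covers_iff_coversProgression_one {a : ℤ} :
    Covers π r a m ↔ CoversProgression π r a 1 m := by
  simp only [Covers, CoversProgression, one_mul]

theorem CoversProgression.mul_left {a d : ℤ} (h : CoversProgression π r a d m) (c : ℕ) :
    CoversProgression π (fun i => c * r i % π i) (c * a) (c * d) m := by
  intro j hj
  obtain ⟨i, hi⟩ := h j hj
  refine ⟨i, ?_⟩
  calc (c : ℤ) * a + c * d * j = c * (a + d * j) := by ring
    _ ≡ c * r i [ZMOD π i] := hi.mul_left _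
    _ ≡ ((c * r i % π i : ℕ) : ℤ) [ZMOD π i] := by
      exact_mod_cast (Int.natCast_modEq_iff.mpr (Nat.mod_modEq (c * r i) (π i))).symm

theorem CoversProgression.of_modEq_step {a d d' : ℤ} (h : CoversProgression π r a d m)
    (hd : ∀ i, d ≡ d' [ZMOD π i]) : CoversProgression π r a d' m := by
  intro j hj
  obtain ⟨i, hi⟩ := h j hj
  exact ⟨i, (((hd i).mul_right j).add_left a).symm.trans hi⟩

theorem exists_two_mul_modEq_one (hodd : ∀ i, Odd (π i)) :
    ∃ c : ℕ, ∀ i, 2 * (c : ℤ) ≡ 1 [ZMOD π i] := by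
  have hN : Odd (∏ i, π i) :=
    Finset.prod_induction _ Odd (fun _ _ => Odd.mul) odd_one (fun i _ => hodd i)
  obtain ⟨t, ht⟩ := hN
  have hinv : 2 * ((t + 1 : ℕ) : ℤ) ≡ 1 [ZMOD (∏ i, π i : ℕ)] :=
    Int.modEq_iff_dvd.mpr ⟨-1, by push_cast [ht]; ring⟩
  exact ⟨t + 1, fun i => hinv.of_dvd
    (Int.natCast_dvd_natCast.mpr (Finset.dvd_prod_of_mem π (Finset.mem_univ i)))⟩

theorem exists_covers_of_coversProgression_two (hodd : ∀ i, Odd (π i)) {s : Fin n → ℕ} {x : ℤ}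
    (h : CoversProgression π s x 2 m) :
    ∃ (a : ℤ) (r : Fin n → ℕ), (∀ i, r i < π i) ∧ Covers π r a m := by
  obtain ⟨c, hc⟩ := exists_two_mul_modEq_one hodd
  refine ⟨c * x, fun i => c * s i % π i, fun i => Nat.mod_lt _ (hodd i).pos, ?_⟩
  rw [covers_iff_coversProgression_one]
  exact (h.mul_left c).of_modEq_step fun i => by rw [mul_comm]; exact hc i

theorem exists_coversProgression_two_of_parity {b : ℤ} {b₁ : ℕ} {s : Fin n → ℕ}
    (h : ∀ j : ℕ, j < 2 * m + 1 →
      (b + j ≡ b₁ [ZMOD 2] ∨ ∃ i, b + j ≡ s i [ZMOD π i])) :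
    ∃ x : ℤ, CoversProgression π s x 2 m := by
  obtain ⟨j₀, hj₀, hparity⟩ : ∃ j₀ : ℕ, j₀ < 2 ∧ ¬ b + j₀ ≡ b₁ [ZMOD 2] := by
    by_cases hb : b ≡ b₁ [ZMOD 2]
    · refine ⟨1, one_lt_two, ?_⟩
      unfold Int.ModEq at hb ⊢
      omega
    · exact ⟨0, two_pos, by simpa using hb⟩
  refine ⟨b + j₀, fun t ht => ?_⟩
  rcases h (j₀ + 2 * t) (by omega) with hbad | hcov
  · refine absurd ?_ hparity
    unfold Int.ModEq at hbad ⊢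
    push_cast at hbad
    omega
  · simpa [add_assoc] using hcov

theorem parity_of_covers {a : ℤ} (h : Covers π r a m) (j : ℕ) (hj : j < 2 * m + 1) :
    2 * a - 1 + j ≡ 1 [ZMOD 2] ∨ ∃ i, 2 * a - 1 + j ≡ (2 * r i % π i : ℕ) [ZMOD π i] := by
  rcases Nat.even_or_odd' j with ⟨t, rfl | rfl⟩
  · left
    unfold Int.ModEq
    push_cast
    omega
  · right
    have hdoubled := (covers_iff_coversProgression_one.mp h).mul_left 2
    obtain ⟨i, hi⟩ := hdoubled t (by omega)
    exact ⟨i, by convert hi using 1; push_cast; ring⟩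

end

theorem covering_doubling_with_two_general (m k : ℕ)
    (π : Fin (k - 1) → ℕ) (hodd : ∀ i, Odd (π i)) :
    (∃ (a : ℤ) (r : Fin (k - 1) → ℕ), (∀ i, r i < π i) ∧ Covers π r a m)
    ↔ (∃ (b : ℤ) (b₁ : ℕ) (s : Fin (k - 1) → ℕ), b₁ < 2 ∧ (∀ i, s i < π i) ∧
        ∀ j : ℕ, j < 2 * m + 1 →
          (b + (j : ℤ) ≡ (b₁ : ℤ) [ZMOD (2 : ℤ)] ∨
            ∃ i : Fin (k - 1), b + (j : ℤ) ≡ (s i : ℤ) [ZMOD (π i : ℤ)])) := by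
  constructor
  · rintro ⟨a, r, -, hcov⟩
    exact ⟨2 * a - 1, 1, fun i => 2 * r i % π i, one_lt_two,
      fun i => Nat.mod_lt _ (hodd i).pos, parity_of_covers hcov⟩
  · rintro ⟨b, b₁, s, -, -, hcov⟩
    obtain ⟨x, hx⟩ := exists_coversProgression_two_of_parity hcov
    exact exists_covers_of_coversProgression_two hodd hx

theorem covering_doubling_with_two (m k : ℕ) (hm : 1 ≤ m) (hk : 2 ≤ k)
    (π : Fin (k - 1) → ℕ) (hπ : ∀ i, Nat.Prime (π i)) (hodd : ∀ i, Odd (π i))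
    (hdist : ∀ i j : Fin (k - 1), i ≠ j → π i ≠ π j) :
    (∃ (a : ℤ) (r : Fin (k - 1) → ℕ), (∀ i, r i < π i) ∧ Covers π r a m)
    ↔ (∃ (b : ℤ) (b₁ : ℕ) (s : Fin (k - 1) → ℕ), b₁ < 2 ∧ (∀ i, s i < π i) ∧
        ∀ j : ℕ, j < 2 * m + 1 →
          (b + (j : ℤ) ≡ (b₁ : ℤ) [ZMOD (2 : ℤ)] ∨
            ∃ i : Fin (k - 1), b + (j : ℤ) ≡ (s i : ℤ) [ZMOD (π i : ℤ)])) :=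
  covering_doubling_with_two_general m k π hodd

end PrimorialDifferences
end
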